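/- Let L be a distributive abstract logic, T a theory, and a an expression with a ∉ T. Then there exists a prime theory P with T ⊆ P and a ∉ P. -/

import Mathlib

/-! Lindenbaum's argument: by Zorn's lemma, `T` extends to a theory `P` maximal among the
theories omitting `a`. If `P = ⋂₀ 𝒯`, some member of `𝒯` omits `a`; it contains `P`, so by
maximality it is `P`. Thus `P` is even totally prime. -/

variable {α : Type*}

def TotallyPrime (Th : Set (Set α)) (T : Set α) : Prop :=
  T ∈ Th ∧ ∀ 𝒯 ⊆ Th, 𝒯.Nonempty → T = ⋂₀ 𝒯 → T ∈ 𝒯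

def PrimeTheory (Th : Set (Set α)) (T : Set α) : Prop :=
  T ∈ Th ∧ ∀ 𝒯 ⊆ Th, 𝒯.Finite → 𝒯.Nonempty → T = ⋂₀ 𝒯 → T ∈ 𝒯

section Lindenbaum

variable {Th : Set (Set α)}

theorem TotallyPrime.primeTheory {P : Set α} (hP : TotallyPrime Th P) : PrimeTheory Th P :=
  ⟨hP.1, fun 𝒯 h𝒯 _ hne hP𝒯 => hP.2 𝒯 h𝒯 hne hP𝒯⟩

theorem totallyPrime_of_maximal_notMem {a : α} {P : Set α}
    (hP : Maximal (fun Q => Q ∈ Th ∧ a ∉ Q) P) : TotallyPrime Th P := by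
  refine ⟨hP.prop.1, fun 𝒯 h𝒯 _ hP𝒯 => ?_⟩
  obtain ⟨Q, hQ, haQ⟩ : ∃ Q ∈ 𝒯, a ∉ Q := by
    simpa [hP𝒯] using hP.prop.2
  have hPQ : P ⊆ Q := hP𝒯 ▸ Set.sInter_subset_of_mem hQ
  rwa [hP.eq_of_subset ⟨h𝒯 hQ, haQ⟩ hPQ]

theorem exists_superset_maximal_notMem
    (hchain : ∀ 𝒞 ⊆ Th, 𝒞.Nonempty → IsChain (· ⊆ ·) 𝒞 → ⋃₀ 𝒞 ∈ Th)
    {T : Set α} (hT : T ∈ Th) {a : α} (ha : a ∉ T) :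
    ∃ P, T ⊆ P ∧ Maximal (fun Q => Q ∈ Th ∧ a ∉ Q) P := by
  refine zorn_subset_nonempty _ (fun 𝒞 h𝒞 hch hne => ?_) T ⟨hT, ha⟩
  refine ⟨⋃₀ 𝒞, ⟨hchain 𝒞 (fun Q hQ => (h𝒞 hQ).1) hne hch, ?_⟩,
    fun _ => Set.subset_sUnion_of_mem⟩
  rintro ⟨Q, hQ, haQ⟩
  exact (h𝒞 hQ).2 haQ

end Lindenbaum

theorem stmt7_general (Th : Set (Set α))
    (hchain : ∀ 𝒞 ⊆ Th, 𝒞.Nonempty → IsChain (· ⊆ ·) 𝒞 → ⋃₀ 𝒞 ∈ Th)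
    (T : Set α) (hT : T ∈ Th) (a : α) (ha : a ∉ T) :
    ∃ P : Set α, PrimeTheory Th P ∧ T ⊆ P ∧ a ∉ P := by
  obtain ⟨P, hTP, hP⟩ := exists_superset_maximal_notMem hchain hT ha
  exact ⟨P, (totallyPrime_of_maximal_notMem hP).primeTheory, hTP, hP.prop.2⟩

theorem stmt7 (Th : Set (Set α)) (and or : α → α → α)
    (hne : Th.Nonempty)
    (hinter : ∀ 𝒯 ⊆ Th, 𝒯.Nonempty → ⋂₀ 𝒯 ∈ Th)
    (hchain : ∀ 𝒞 ⊆ Th, 𝒞.Nonempty → IsChain (· ⊆ ·) 𝒞 → ⋃₀ 𝒞 ∈ Th)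
    (hgen : ∀ T ∈ Th, ∃ 𝒯 ⊆ {P | TotallyPrime Th P}, 𝒯.Nonempty ∧ T = ⋂₀ 𝒯)
    (hand : ∀ a b : α, ∀ Q, TotallyPrime Th Q → (and a b ∈ Q ↔ a ∈ Q ∧ b ∈ Q))
    (hor : ∀ a b : α, ∀ Q, TotallyPrime Th Q → (or a b ∈ Q ↔ a ∈ Q ∨ b ∈ Q))
    (T : Set α) (hT : T ∈ Th) (a : α) (ha : a ∉ T) :
    ∃ P : Set α, PrimeTheory Th P ∧ T ⊆ P ∧ a ∉ P :=
  stmt7_general Th hchain T hT a ha
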